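/- Let Q_uu (m×m) and Q_yy (n×n) be symmetric real matrices, let A be an ℓ×(m+n) real matrix acting on pairs (u,y) ∈ ℝᵐ×ℝⁿ, and let Z_u (m×k), Z_y (n×k) be matrices. Assume: (i) δuʳ = Z_u δzʳ − δûʳ and δyʳ = Z_y δzʳ − δŷʳ for some δzʳ ∈ ℝᵏ; (ii) A (δûˡ, δŷˡ) = h₀ˡ; (iii) Aᵀ δλʳ = −((u₀ʳ + Q_uu δuʳ), (y₀ʳ + Q_yy δyʳ)). Define ū₀ˡ := u₀ˡ − Q_uu δûˡ, ȳ₀ˡ := y₀ˡ − Q_yy δŷˡ, and z₀ˡ := Z_uᵀ ū₀ˡ + Z_yᵀ ȳ₀ˡ. Then u₀ˡᵀ δuʳ + y₀ˡᵀ δyʳ + h₀ˡᵀ δλʳ = z₀ˡᵀ δzʳ − ū₀ˡᵀ δûʳ − ȳ₀ˡᵀ δŷʳ − δûˡᵀ u₀ʳ − δŷˡᵀ y₀ʳ. -/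
import Mathlib


open Matrix

private lemma symdot {p : ℕ} (M : Matrix (Fin p) (Fin p) ℝ) (h : M.IsSymm)
    (a b : Fin p → ℝ) : a ⬝ᵥ M.mulVec b = M.mulVec a ⬝ᵥ b := by
  rw [dotProduct_mulVec, ← mulVec_transpose, h]

private lemma tdot {p q : ℕ} (M : Matrix (Fin p) (Fin q) ℝ)
    (a : Fin p → ℝ) (b : Fin q → ℝ) : Mᵀ.mulVec a ⬝ᵥ b = a ⬝ᵥ M.mulVec b := by
  rw [dotProduct_mulVec, mulVec_transpose]

/-- Value-function derivative propagation identity: the residual–sensitivity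
product `u₀ˡᵀδuʳ + y₀ˡᵀδyʳ + h₀ˡᵀδλʳ` can be rewritten using only the
nullspace quantities `z₀ˡ, δzʳ` and the particular solutions
`δûˡ, δŷˡ, δûʳ, δŷʳ`, given the nullspace decomposition of the primal step,
the primal feasibility of `(δûˡ, δŷˡ)`, and the dual stationarity of `δλʳ`. -/
theorem stmt10 (m n l k : ℕ)
    (Quu : Matrix (Fin m) (Fin m) ℝ) (hQuu : Quu.IsSymm)
    (Qyy : Matrix (Fin n) (Fin n) ℝ) (hQyy : Qyy.IsSymm)
    (A : Matrix (Fin l) (Fin m ⊕ Fin n) ℝ)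
    (Zu : Matrix (Fin m) (Fin k) ℝ) (Zy : Matrix (Fin n) (Fin k) ℝ)
    (u0l u0r δur δuHatL δuHatR : Fin m → ℝ)
    (y0l y0r δyr δyHatL δyHatR : Fin n → ℝ)
    (h0l : Fin l → ℝ) (δlamR : Fin l → ℝ) (δzr : Fin k → ℝ)
    (hdecu : δur = Zu.mulVec δzr - δuHatR)
    (hdecy : δyr = Zy.mulVec δzr - δyHatR)
    (hfeas : A.mulVec (Sum.elim δuHatL δyHatL) = h0l)
    (hstat : Aᵀ.mulVec δlamR
      = Sum.elim (-(u0r + Quu.mulVec δur)) (-(y0r + Qyy.mulVec δyr)))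
    (u0bar : Fin m → ℝ) (hu0bar : u0bar = u0l - Quu.mulVec δuHatL)
    (y0bar : Fin n → ℝ) (hy0bar : y0bar = y0l - Qyy.mulVec δyHatL)
    (z0l : Fin k → ℝ) (hz0l : z0l = Zuᵀ.mulVec u0bar + Zyᵀ.mulVec y0bar) :
    u0l ⬝ᵥ δur + y0l ⬝ᵥ δyr + h0l ⬝ᵥ δlamR
      = z0l ⬝ᵥ δzr - u0bar ⬝ᵥ δuHatR - y0bar ⬝ᵥ δyHatR
        - δuHatL ⬝ᵥ u0r - δyHatL ⬝ᵥ y0r := by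
  have key : h0l ⬝ᵥ δlamR
      = -(δuHatL ⬝ᵥ (u0r + Quu.mulVec δur)) + -(δyHatL ⬝ᵥ (y0r + Qyy.mulVec δyr)) := by
    have h1 : h0l ⬝ᵥ δlamR = (Sum.elim δuHatL δyHatL) ⬝ᵥ (Aᵀ.mulVec δlamR) := by
      rw [← hfeas, dotProduct_mulVec, vecMul_transpose]
    rw [h1, hstat]
    simp [dotProduct, Fintype.sum_sum_type, Finset.sum_add_distrib, mul_add, neg_add]
  subst hz0l hu0bar hy0bar hdecu hdecy
  rw [key]
  simp only [dotProduct_add, add_dotProduct, dotProduct_sub, sub_dotProduct, tdot,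
    symdot Quu hQuu, symdot Qyy hQyy, mulVec_sub]
  ring
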